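/- For every abelian group G, n ≥ 1, and loops p, q : Ω K(G,n), applying the addition +_k : K(G,n) × K(G,n) → K(G,n) to the pair of loops yields ap²_{+_k}(p,q) = p · q, where · is path composition. Consequently, for any x : K(G,n) and any p, q : x = x one has p · q = q · p. -/

import Mathlib

open ContinuousMap unitInterval
open scoped Topology

noncomputable section
/-- The setoid of continuous maps up to (free) homotopy. -/
instance homotopicSetoid (X Y : Type) [TopologicalSpace X] [TopologicalSpace Y] :
    Setoid C(X, Y) :=
  ⟨ContinuousMap.Homotopic, ContinuousMap.Homotopic.equivalence⟩

/-- A (topological) model of the data of the family of Eilenberg-MacLane spaces `K(G,n)`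
of an abelian group `G`, together with their H-space addition `+ₖ` and inversion `-ₖ`.
`K(G,0)` is `G` itself (as a set, i.e. a discrete space), and for `n ≥ 1` the space
`K(G,n)` is characterised by `πₙ(K(G,n)) ≅ G` together with the vanishing of all of its
other homotopy groups.  The addition `+ₖ` is characterised by its two unit laws (this
determines it uniquely, by wedge-connectivity), and in degree `0` it is the addition
of `G`. -/
structure EMData (G : Type) [AddCommGroup G] : Type 1 where
  /-- the spaces `K(G,n)` -/
  K : ℕ → Type
  [topK : ∀ n, TopologicalSpace (K n)]
  /-- the basepoints `0ₖ` -/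
  pt : ∀ n, K n
  /-- `K(G,0)` is the group `G` itself, -/
  K0equiv : K 0 ≃ G
  /-- as a discrete space (a set). -/
  K0discrete : DiscreteTopology (K 0)
  K0pt : K0equiv (pt 0) = 0
  /-- `K(G,n)` is path connected for `n ≥ 1`, -/
  conn : ∀ n : ℕ, PathConnectedSpace (K (n + 1))
  /-- `πₙ(K(G,n)) ≅ G`, -/
  piSelf : ∀ n : ℕ, Nonempty (π_ (n + 1) (K (n + 1)) (pt (n + 1)) ≃* Multiplicative G)
  /-- and all other homotopy groups of `K(G,n)` vanish. -/
  piOther : ∀ n m : ℕ, m + 1 ≠ n → ∀ x : K n, Subsingleton (π_ (m + 1) (K n) x)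
  /-- the addition `+ₖ : K(G,n) × K(G,n) → K(G,n)` -/
  add : ∀ n, C(K n × K n, K n)
  /-- the inversion `-ₖ : K(G,n) → K(G,n)` -/
  neg : ∀ n, C(K n, K n)
  /-- `0ₖ +ₖ 0ₖ = 0ₖ` (this holds definitionally in the synthetic construction) -/
  add_pt : ∀ n, add n (pt n, pt n) = pt n
  /-- `+ₖ` is characterised by its unit laws: `0ₖ +ₖ y = y` … -/
  add_zero_left : ∀ n, ContinuousMap.Homotopic
    ((add n).comp ((ContinuousMap.const (K n) (pt n)).prodMk (ContinuousMap.id _)))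
    (ContinuousMap.id _)
  /-- … and `x +ₖ 0ₖ = x`. -/
  add_zero_right : ∀ n, ContinuousMap.Homotopic
    ((add n).comp ((ContinuousMap.id _).prodMk (ContinuousMap.const (K n) (pt n))))
    (ContinuousMap.id _)
  /-- in degree `0`, `+ₖ` is the addition of `G` -/
  add_K0 : ∀ x y : K 0, K0equiv (add 0 (x, y)) = K0equiv x + K0equiv y
  /-- and `-ₖ` is the negation of `G`. -/
  neg_K0 : ∀ x : K 0, K0equiv (neg 0 x) = - K0equiv x

attribute [instance] EMData.topK

/-- `ap²₊ₖ(p,q)` : applying the addition `+ₖ` to a pair of loops `p, q : Ω K(G,n)` gives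
the loop `t ↦ p t +ₖ q t` at `0ₖ` (using `0ₖ +ₖ 0ₖ = 0ₖ`). -/
def apAdd {G : Type} [AddCommGroup G] (E : EMData G) (n : ℕ)
    (p q : Path (E.pt n) (E.pt n)) : Path (E.pt n) (E.pt n) where
  toFun := fun t => E.add n (p t, q t)
  continuous_toFun := (E.add n).continuous.comp (p.continuous.prodMk q.continuous)
  source' := by simp [E.add_pt n]
  target' := by simp [E.add_pt n]

/-!
The unit laws of `+ₖ` hold only up to *free* homotopy, so on `π₁(K, 0ₖ)` the maps `u ↦ u +ₖ 1`
and `v ↦ 1 +ₖ v` are inner automorphisms (conjugation by the track of the homotopy at `0ₖ`),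
in particular surjective. Since `(u, 1)` and `(1, v)` commute in `π₁ × π₁` and `+ₖ` induces a
homomorphism `π₁ × π₁ → π₁`, any two elements of `π₁` commute; the conjugations are then
trivial and `u +ₖ v = (u +ₖ 1)(1 +ₖ v) = u v`. For `n ≥ 1`, `K(G,n)` is path connected, so
commutativity moves to every basepoint.
-/

theorem MonoidHom.commute_of_surjective_comp_inl_inr {M N P : Type*} [Monoid M] [Monoid N]
    [Monoid P] (μ : M × N →* P) (hl : Function.Surjective (μ.comp (MonoidHom.inl M N)))
    (hr : Function.Surjective (μ.comp (MonoidHom.inr M N))) (x y : P) : Commute x y := by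
  obtain ⟨u, rfl⟩ := hl x
  obtain ⟨v, rfl⟩ := hr y
  exact (MonoidHom.commute_inl_inr u v).map μ

section EckmannHilton

variable {G : Type*} [Group G] (μ : G × G →* G) {a b : G}

theorem MonoidHom.commute_of_conj (ha : ∀ u, μ (u, 1) = a * u * a⁻¹)
    (hb : ∀ v, μ (1, v) = b * v * b⁻¹) (x y : G) : Commute x y :=
  μ.commute_of_surjective_comp_inl_inr
    (fun w => ⟨a⁻¹ * w * a, by rw [MonoidHom.comp_apply, MonoidHom.inl_apply, ha]; group⟩)
    (fun w => ⟨b⁻¹ * w * b, by rw [MonoidHom.comp_apply, MonoidHom.inr_apply, hb]; group⟩) x y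

theorem MonoidHom.apply_eq_mul_of_conj (ha : ∀ u, μ (u, 1) = a * u * a⁻¹)
    (hb : ∀ v, μ (1, v) = b * v * b⁻¹) (u v : G) : μ (u, v) = u * v := by
  have hcomm := μ.commute_of_conj ha hb
  calc μ (u, v) = μ (u, 1) * μ (1, v) := by rw [← map_mul, Prod.mk_mul_mk, mul_one, one_mul]
    _ = u * v := by rw [ha, hb, (hcomm a u).eq, (hcomm b v).eq]; group

end EckmannHilton

namespace FundamentalGroup

variable {X Y Z : Type*} [TopologicalSpace X] [TopologicalSpace Y] [TopologicalSpace Z]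

def prod (x : X) (y : Y) :
    FundamentalGroup X x × FundamentalGroup Y y →* FundamentalGroup (X × Y) (x, y) where
  toFun uv := fromPath (Path.Homotopic.prod (toPath uv.1) (toPath uv.2))
  map_one' := rfl
  map_mul' u v :=
    (Path.Homotopic.comp_prod_eq_prod_comp (toPath v.1) (toPath v.2) (toPath u.1) (toPath u.2)).symm

def map₂ (m : C(X × Y, Z)) {x : X} {y : Y} {z : Z} (h : m (x, y) = z) :
    FundamentalGroup X x × FundamentalGroup Y y →* FundamentalGroup Z z :=
  (mapOfEq m h).comp (prod x y)

section Map₂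

variable (m : C(X × Y, Z)) {x : X} {y : Y} {z : Z} (h : m (x, y) = z)

theorem map₂_mk (p : Path x x) (q : Path y y) :
    map₂ m h (.mk p, .mk q) = .mk (((p.prod q).map m.continuous).cast h.symm h.symm) :=
  mapOfEq_apply m h _

theorem map₂_inl (u : FundamentalGroup X x) :
    map₂ m h (u, 1) = mapOfEq (m.comp ((ContinuousMap.id X).prodMk (.const X y))) h u := by
  obtain ⟨p, rfl⟩ := Path.Homotopic.Quotient.mk_surjective u
  exact (mapOfEq_apply m h _).trans
    (mapOfEq_apply (m.comp ((ContinuousMap.id X).prodMk (.const X y))) h (.mk p)).symm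

theorem map₂_inr (v : FundamentalGroup Y y) :
    map₂ m h (1, v) = mapOfEq (m.comp ((ContinuousMap.const Y x).prodMk (.id Y))) h v := by
  obtain ⟨q, rfl⟩ := Path.Homotopic.Quotient.mk_surjective v
  exact (mapOfEq_apply m h _).trans
    (mapOfEq_apply (m.comp ((ContinuousMap.const Y x).prodMk (.id Y))) h (.mk q)).symm

end Map₂

theorem exists_mapOfEq_eq_conj {f : C(X, X)} (hf : f.Homotopic (ContinuousMap.id X)) {x : X}
    (h : f x = x) : ∃ a : FundamentalGroup X x, ∀ u, mapOfEq f h u = a * u * a⁻¹ := by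
  obtain ⟨H⟩ := hf
  set A : FundamentalGroup X x := fromPath (.mk ((H.evalAt x).cast h.symm rfl))
  have hA (u : FundamentalGroup X x) : A * mapOfEq f h u = u * A := by
    obtain ⟨p, rfl⟩ := Path.Homotopic.Quotient.mk_surjective u
    rw [mapOfEq_apply]
    exact Path.Homotopic.Quotient.eq.2 ((Path.Homotopic.map_trans_evalAt H p).pathCast h.symm rfl)
  exact ⟨A⁻¹, fun u => by rw [inv_inv, mul_assoc, ← hA, inv_mul_cancel_left]⟩

theorem commute_of_path {x y : X} (γ : Path x y) (hx : ∀ u v : FundamentalGroup X x, Commute u v)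
    (u v : FundamentalGroup X y) : Commute u v := by
  let φ := fundamentalGroupMulEquivOfPath γ
  simpa only [MulEquiv.apply_symm_apply] using (hx (φ.symm u) (φ.symm v)).map φ

section HomotopyUnital

variable {m : C(X × X, X)} {e : X}

theorem map₂_inl_eq_conj (h : m (e, e) = e)
    (hr : (m.comp ((ContinuousMap.id X).prodMk (.const X e))).Homotopic (.id X)) :
    ∃ a, ∀ u, map₂ m h (u, 1) = a * u * a⁻¹ := by
  obtain ⟨a, ha⟩ := exists_mapOfEq_eq_conj hr h
  exact ⟨a, fun u => (map₂_inl m h u).trans (ha u)⟩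

theorem map₂_inr_eq_conj (h : m (e, e) = e)
    (hl : (m.comp ((ContinuousMap.const X e).prodMk (.id X))).Homotopic (.id X)) :
    ∃ b, ∀ v, map₂ m h (1, v) = b * v * b⁻¹ := by
  obtain ⟨b, hb⟩ := exists_mapOfEq_eq_conj hl h
  exact ⟨b, fun v => (map₂_inr m h v).trans (hb v)⟩

theorem commute_of_homotopy_unital (h : m (e, e) = e)
    (hl : (m.comp ((ContinuousMap.const X e).prodMk (.id X))).Homotopic (.id X))
    (hr : (m.comp ((ContinuousMap.id X).prodMk (.const X e))).Homotopic (.id X))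
    (u v : FundamentalGroup X e) : Commute u v := by
  obtain ⟨a, ha⟩ := map₂_inl_eq_conj h hr
  obtain ⟨b, hb⟩ := map₂_inr_eq_conj h hl
  exact (map₂ m h).commute_of_conj ha hb u v

theorem map₂_eq_mul_of_homotopy_unital (h : m (e, e) = e)
    (hl : (m.comp ((ContinuousMap.const X e).prodMk (.id X))).Homotopic (.id X))
    (hr : (m.comp ((ContinuousMap.id X).prodMk (.const X e))).Homotopic (.id X))
    (u v : FundamentalGroup X e) : map₂ m h (u, v) = u * v := by
  obtain ⟨a, ha⟩ := map₂_inl_eq_conj h hr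
  obtain ⟨b, hb⟩ := map₂_inr_eq_conj h hl
  exact (map₂ m h).apply_eq_mul_of_conj ha hb u v

end HomotopyUnital

end FundamentalGroup

/-- For every abelian group `G`, `n ≥ 1`, and loops
`p, q : Ω K(G,n)`, applying the addition `+ₖ` to the pair of loops yields
`ap²₊ₖ(p,q) = p · q` (where `·` is path composition).  Consequently, for any
`x : K(G,n)` and any `p, q : x = x` one has `p · q = q · p`. -/
theorem ap_add_eq_trans (G : Type) [AddCommGroup G] (E : EMData G) (n : ℕ) (hn : 1 ≤ n) :
    (∀ p q : Path (E.pt n) (E.pt n), Path.Homotopic (apAdd E n p q) (p.trans q)) ∧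
    (∀ (x : E.K n) (p q : Path x x), Path.Homotopic (p.trans q) (q.trans p)) := by
  have hcomm := FundamentalGroup.commute_of_homotopy_unital (E.add_pt n) (E.add_zero_left n)
    (E.add_zero_right n)
  refine ⟨fun p q => ?_, fun x p q => ?_⟩
  · have hmul := FundamentalGroup.map₂_eq_mul_of_homotopy_unital (E.add_pt n)
      (E.add_zero_left n) (E.add_zero_right n) (.mk p) (.mk q)
    -- in `FundamentalGroup`, `⟦p⟧ * ⟦q⟧` is the class of `q.trans p`
    rw [FundamentalGroup.map₂_mk, (hcomm _ _).eq] at hmul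
    exact Path.Homotopic.Quotient.eq.1 hmul
  · obtain ⟨m, rfl⟩ : ∃ m, n = m + 1 := ⟨n - 1, by omega⟩
    have := E.conn m
    exact (Path.Homotopic.Quotient.eq.1 (FundamentalGroup.commute_of_path
      (PathConnectedSpace.somePath _ x) hcomm (.mk p) (.mk q)).eq).symm
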